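/- arXiv:1611.01200 — 8 statements merged into one kernel-verified Lean document; each statement's English description precedes it below -/
import Mathlib

section
/- Let N be a natural number. The class of all finite digraphs D admitting a partition D = D_e ∪ D_c ∪ D_f where the induced digraph on D_e is empty (no edges between distinct vertices), the induced digraph on D_c is complete and reflexive, |D_f| ≤ N, and the connections between D_e and D_c are uniform (for all x,y ∈ D_e and z,t ∈ D_c: x→z iff y→t, and z→x iff t→y), is well quasi-ordered under the surjective homomorphism ordering. -/
/-!
Fix for each digraph of the class a decomposition and number the at most `N` vertices of `D_f`.
The profile of a vertex (its label, whether it lies in `D_e`, its loop, whether it has an edge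
to or from `D_c`, and its edges to and from each labelled vertex) ranges over a finite set, and a
profile-preserving map between two decomposed digraphs is a homomorphism: edges inside `D_e` are
loops, and by uniformity one edge between `D_e` and `D_c` in a given direction forces all of
them. Hence `D₁ ⪯ D₂` as soon as every profile occurs in `D₂` at least as often as in `D₁`, and
occurs in `D₂` only if it occurs in `D₁`. By Dickson's lemma and pigeonhole on the pattern of
zero counts, this order on count vectors is a well quasi-order.
-/

/-- A finite structure with a single binary relation (digraph/graph model). -/
structure FinBinRel where
  n : ℕ
  rel : Fin n → Fin n → Prop

/-- `f` is a homomorphism from `A` to `B`: it maps related pairs to related pairs. -/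
def IsHom (A B : FinBinRel) (f : Fin A.n → Fin B.n) : Prop :=
  ∀ x y, A.rel x y → B.rel (f x) (f y)

/-- `f` is a strong homomorphism: a homomorphism such that every related pair of
elements of the image is the image of a related pair. -/
def IsStrongHom (A B : FinBinRel) (f : Fin A.n → Fin B.n) : Prop :=
  IsHom A B f ∧
    ∀ p q : Fin B.n, B.rel p q → (∃ a, f a = p) → (∃ b, f b = q) →
      ∃ u v, A.rel u v ∧ f u = p ∧ f v = q

/-- Homomorphic image ordering: `A ⪯ B` iff there is a surjective homomorphism `B → A`. -/
def HomLe (A B : FinBinRel) : Prop :=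
  ∃ f : Fin B.n → Fin A.n, Function.Surjective f ∧ IsHom B A f

/-- Strong homomorphic image ordering: `A ⪯ B` iff there is a surjective strong
homomorphism `B → A`. -/
def StrongLe (A B : FinBinRel) : Prop :=
  ∃ f : Fin B.n → Fin A.n, Function.Surjective f ∧ IsStrongHom B A f

/-- Isomorphism of binary relational structures. -/
def BinIso (A B : FinBinRel) : Prop :=
  ∃ e : Fin A.n ≃ Fin B.n, ∀ x y, A.rel x y ↔ B.rel (e x) (e y)

/-- A class `C` is well quasi-ordered by `r`: every infinite sequence of members of `C`
contains a "good pair". (For orderings on finite structures respecting size this is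
equivalent to having no infinite antichain.) -/
def IsWqo (r : FinBinRel → FinBinRel → Prop) (C : Set FinBinRel) : Prop :=
  ∀ f : ℕ → FinBinRel, (∀ i, f i ∈ C) → ∃ i j, i < j ∧ r (f i) (f j)

/-- A reflexive graph: symmetric relation with a loop at every vertex. -/
def ReflGraph (A : FinBinRel) : Prop :=
  (∀ x, A.rel x x) ∧ (∀ x y, A.rel x y → A.rel y x)

/-- An irreflexive graph: symmetric and loopless. -/
def IrrGraph (A : FinBinRel) : Prop :=
  (∀ x, ¬ A.rel x x) ∧ (∀ x y, A.rel x y → A.rel y x)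

/-- The irreflexive complete graph on `n` vertices. -/
def Kirr (n : ℕ) : FinBinRel := ⟨n, fun i j => i ≠ j⟩

/-- The complete reflexive graph/digraph on `n` vertices (all pairs, including loops). -/
def Kcompl (n : ℕ) : FinBinRel := ⟨n, fun _ _ => True⟩

/-- The subcomplete reflexive graph `N_{n,k}` (for `2k ≤ n`): the complete reflexive
graph on `n` vertices with the `k` disjoint edges `{0,1},{2,3},…,{2k-2,2k-1}` deleted. -/
def Ngraph (n k : ℕ) : FinBinRel :=
  ⟨n, fun i j => ¬ ∃ m, m < k ∧
      ((i.val = 2 * m ∧ j.val = 2 * m + 1) ∨ (j.val = 2 * m ∧ i.val = 2 * m + 1))⟩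

/-- The subcomplete digraph `N⃗_{n,k}` (for `2k ≤ n`): the complete reflexive digraph
on `n` vertices with the `k` disjoint directed edges `(0,1),(2,3),…,(2k-2,2k-1)` removed. -/
def Ndigraph (n k : ℕ) : FinBinRel :=
  ⟨n, fun i j => ¬ ∃ m, m < k ∧ i.val = 2 * m ∧ j.val = 2 * m + 1⟩

/-- `D` has a set of `k` pairwise disjoint edges (all `2k` endpoints distinct). -/
def HasDisjointEdges (D : FinBinRel) (k : ℕ) : Prop :=
  ∃ a b : Fin k → Fin D.n,
    Function.Injective (Sum.elim a b) ∧ ∀ i, D.rel (a i) (b i)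

/-- Membership in the class `𝒯_N` of Theorem 2.1: `D` splits into an empty part, a
complete reflexive part, a part of size at most `N`, with uniform connections between
the empty and complete parts. -/
def InClassT (N : ℕ) (D : FinBinRel) : Prop :=
  ∃ De Dc Df : Set (Fin D.n),
    (∀ x, x ∈ De ∨ x ∈ Dc ∨ x ∈ Df) ∧
    Disjoint De Dc ∧ Disjoint De Df ∧ Disjoint Dc Df ∧
    (∀ x ∈ De, ∀ y ∈ De, x ≠ y → ¬ D.rel x y) ∧
    (∀ x ∈ Dc, ∀ y ∈ Dc, D.rel x y) ∧
    Df.ncard ≤ N ∧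
    (∀ x ∈ De, ∀ y ∈ De, ∀ z ∈ Dc, ∀ t ∈ Dc,
      (D.rel x z ↔ D.rel y t) ∧ (D.rel z x ↔ D.rel t y))

open Function

theorem exists_surjective_of_natCard_le {X Y : Type*} [Finite X] [Finite Y]
    (hle : Nat.card X ≤ Nat.card Y) (hzero : Nat.card X = 0 → Nat.card Y = 0) :
    ∃ f : Y → X, Surjective f := by
  have := Fintype.ofFinite X
  have := Fintype.ofFinite Y
  rw [exists_surjective_iff]
  refine ⟨?_, Embedding.nonempty_of_card_le (by simpa only [Nat.card_eq_fintype_card] using hle)⟩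
  rcases isEmpty_or_nonempty X with hX | hX
  · have : IsEmpty Y := Finite.card_eq_zero_iff.mp (hzero (Finite.card_eq_zero_iff.mpr hX))
    exact ⟨isEmptyElim⟩
  · exact ⟨fun _ => hX.some⟩

theorem exists_surjective_comp_eq_of_card_fiber_le {α β T : Type*} [Finite α] [Finite β]
    (τ₁ : α → T) (τ₂ : β → T)
    (h : ∀ t, Nat.card {a // τ₁ a = t} ≤ Nat.card {b // τ₂ b = t} ∧
      (Nat.card {a // τ₁ a = t} = 0 → Nat.card {b // τ₂ b = t} = 0)) :
    ∃ F : β → α, Surjective F ∧ ∀ b, τ₁ (F b) = τ₂ b := by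
  choose σ hσ using fun t => exists_surjective_of_natCard_le (h t).1 (h t).2
  refine ⟨Equiv.sigmaFiberEquiv τ₁ ∘ Sigma.map id σ ∘ (Equiv.sigmaFiberEquiv τ₂).symm, ?_,
    fun b => (σ _ _).2⟩
  exact (Equiv.sigmaFiberEquiv τ₁).surjective.comp
    ((surjective_id.sigma_map hσ).comp (Equiv.sigmaFiberEquiv τ₂).symm.surjective)

theorem wellQuasiOrdered_pi_le_and_zero {ι : Type*} [Finite ι] :
    WellQuasiOrdered fun c d : ι → ℕ => ∀ i, c i ≤ d i ∧ (c i = 0 → d i = 0) := by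
  intro f
  obtain ⟨m, n, hmn, hzero, hle⟩ :=
    (Finite.wellQuasiOrdered (α := ι → Prop) (· = ·)).prod (wellQuasiOrdered_le (α := ι → ℕ))
      fun k => (fun i => f k i = 0, f k)
  exact ⟨m, n, hmn, fun i => ⟨hle i, (congrFun hzero i).mp⟩⟩

/-- A decomposition witnessing `InClassT N D`, in which `label` numbers the vertices of `D_f`
injectively by `Fin N` and leaves those of `D_e` and `D_c` unlabelled. -/
structure Decomposition (N : ℕ) (D : FinBinRel) where
  De : Set (Fin D.n)
  Dc : Set (Fin D.n)
  label : Fin D.n → Option (Fin N)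
  label_inj : ∀ v w k, label v = some k → label w = some k → v = w
  mem_Dc : ∀ v, v ∈ Dc ↔ v ∉ De ∧ label v = none
  rel_De : ∀ x ∈ De, ∀ y ∈ De, x ≠ y → ¬ D.rel x y
  rel_Dc : ∀ x ∈ Dc, ∀ y ∈ Dc, D.rel x y
  uniform : ∀ x ∈ De, ∀ y ∈ De, ∀ z ∈ Dc, ∀ t ∈ Dc,
    (D.rel x z ↔ D.rel y t) ∧ (D.rel z x ↔ D.rel t y)

theorem InClassT.nonempty_decomposition {N : ℕ} {D : FinBinRel} (h : InClassT N D) :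
    Nonempty (Decomposition N D) := by
  classical
  obtain ⟨De, Dc, Df, cover, hEC, -, hCF, hE, hC, hcard, hunif⟩ := h
  obtain ⟨ι⟩ : Nonempty (Df ↪ Fin N) := by
    have := Fintype.ofFinite Df
    exact Embedding.nonempty_of_card_le
      (by rwa [Fintype.card_fin, ← Nat.card_eq_fintype_card, Nat.card_coe_set_eq])
  refine ⟨⟨De, Dc, fun v => if hv : v ∈ Df then some (ι ⟨v, hv⟩) else none, ?_, ?_, hE, hC,
    hunif⟩⟩
  · intro v w k hv hw
    split_ifs at hv hw
    exact congrArg Subtype.val (ι.injective (Option.some_injective _ (hv.trans hw.symm)))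
  · intro v
    by_cases hv : v ∈ Df
    · simp [hv, hCF.notMem_of_mem_right hv]
    · simp only [hv, dite_false, and_true]
      exact ⟨fun hvC => hEC.notMem_of_mem_right hvC,
        fun hvE => ((cover v).resolve_left hvE).resolve_right hv⟩

/-- The data of a vertex that a homomorphism between decomposed digraphs has to respect. -/
abbrev Profile (N : ℕ) : Type :=
  Option (Fin N) × Prop × Prop × Prop × Prop × (Fin N → Prop) × (Fin N → Prop)

namespace Decomposition

variable {N : ℕ} {D D₁ D₂ : FinBinRel}

def profile (P : Decomposition N D) (v : Fin D.n) : Profile N :=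
  (P.label v, v ∈ P.De, D.rel v v, (∃ z ∈ P.Dc, D.rel v z), (∃ z ∈ P.Dc, D.rel z v),
    fun k => ∃ w, P.label w = some k ∧ D.rel v w, fun k => ∃ w, P.label w = some k ∧ D.rel w v)

theorem isHom_of_profile_eq (P₁ : Decomposition N D₁) (P₂ : Decomposition N D₂)
    {F : Fin D₂.n → Fin D₁.n} (hF : ∀ v, P₁.profile (F v) = P₂.profile v) : IsHom D₂ D₁ F := by
  simp only [profile, Prod.mk.injEq] at hF
  have hlabel v : P₁.label (F v) = P₂.label v := (hF v).1
  have hDe v : F v ∈ P₁.De ↔ v ∈ P₂.De := iff_of_eq (hF v).2.1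
  have hDc v : F v ∈ P₁.Dc ↔ v ∈ P₂.Dc := by rw [P₁.mem_Dc, P₂.mem_Dc, hDe, hlabel]
  intro x y hxy
  obtain ⟨-, -, hloop, hxDc, -, hxLabel, -⟩ := hF x
  obtain ⟨-, -, -, -, hDcy, -, hLabely⟩ := hF y
  cases hy : P₂.label y with
  | some k =>
    obtain ⟨w, hw, hxw⟩ := (congrFun hxLabel k).mpr ⟨y, hy, hxy⟩
    rwa [P₁.label_inj w (F y) k hw ((hlabel y).trans hy)] at hxw
  | none =>
    cases hx : P₂.label x with
    | some j =>
      obtain ⟨w, hw, hwy⟩ := (congrFun hLabely j).mpr ⟨x, hx, hxy⟩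
      rwa [P₁.label_inj w (F x) j hw ((hlabel x).trans hx)] at hwy
    | none =>
      by_cases hxe : x ∈ P₂.De <;> by_cases hye : y ∈ P₂.De
      · obtain rfl : x = y := by_contra fun hne => P₂.rel_De x hxe y hye hne hxy
        exact hloop.mpr hxy
      · have hyc : y ∈ P₂.Dc := (P₂.mem_Dc y).mpr ⟨hye, hy⟩
        obtain ⟨z, hz, hxz⟩ := hxDc.mpr ⟨y, hyc, hxy⟩
        have hxe₁ := (hDe x).mpr hxe
        exact ((P₁.uniform _ hxe₁ _ hxe₁ z hz _ ((hDc y).mpr hyc)).1).mp hxz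
      · have hxc : x ∈ P₂.Dc := (P₂.mem_Dc x).mpr ⟨hxe, hx⟩
        obtain ⟨z, hz, hzy⟩ := hDcy.mpr ⟨x, hxc, hxy⟩
        have hye₁ := (hDe y).mpr hye
        exact ((P₁.uniform _ hye₁ _ hye₁ z hz _ ((hDc x).mpr hxc)).2).mp hzy
      · exact P₁.rel_Dc _ ((hDc x).mpr ((P₂.mem_Dc x).mpr ⟨hxe, hx⟩))
          _ ((hDc y).mpr ((P₂.mem_Dc y).mpr ⟨hye, hy⟩))

theorem homLe_of_card_profile_le (P₁ : Decomposition N D₁) (P₂ : Decomposition N D₂)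
    (h : ∀ p, Nat.card {v // P₁.profile v = p} ≤ Nat.card {v // P₂.profile v = p} ∧
      (Nat.card {v // P₁.profile v = p} = 0 → Nat.card {v // P₂.profile v = p} = 0)) :
    HomLe D₁ D₂ := by
  obtain ⟨F, hsurj, hF⟩ := exists_surjective_comp_eq_of_card_fiber_le P₁.profile P₂.profile h
  exact ⟨F, hsurj, P₁.isHom_of_profile_eq P₂ hF⟩

end Decomposition

/-- The class `𝒯_N` is well quasi-ordered under the surjective homomorphism ordering. -/
theorem stmt_3 (N : ℕ) : IsWqo HomLe {D | InClassT N D} := by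
  intro f hf
  let P i : Decomposition N (f i) := (hf i).nonempty_decomposition.some
  obtain ⟨i, j, hij, hcard⟩ :=
    wellQuasiOrdered_pi_le_and_zero (ι := Profile N) fun i p => Nat.card {v // (P i).profile v = p}
  exact ⟨i, j, hij, (P i).homLe_of_card_profile_le (P j) hcard⟩
end

section
/- A downward closed class of finite irreflexive graphs under the surjective homomorphism ordering is well quasi-ordered if and only if it is finite. -/
lemma homle_refl (A : FinBinRel) : HomLe A A :=
  ⟨id, Function.surjective_id, fun _ _ h => h⟩

lemma finBinRel_finite_of_size (m : ℕ) : {A : FinBinRel | A.n = m}.Finite := by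
  have hsub : {A : FinBinRel | A.n = m} ⊆
      Set.range (fun r : Fin m → Fin m → Prop => (⟨m, r⟩ : FinBinRel)) := by
    rintro ⟨n, r⟩ hn
    simp only [Set.mem_setOf_eq] at hn
    subst hn
    exact ⟨r, rfl⟩
  exact (Set.finite_range _).subset hsub

/-- A downward closed class of irreflexive graphs under the homomorphic image ordering is
well quasi-ordered if and only if it is finite. -/
theorem stmt_6 (C : Set FinBinRel) (hC : ∀ D ∈ C, IrrGraph D)
    (hdc : ∀ G H : FinBinRel, IrrGraph G → HomLe G H → H ∈ C → G ∈ C) :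
    IsWqo HomLe C ↔ C.Finite := by
  constructor
  · intro hwqo
    by_contra hinf
    have hlarge : ∀ N : ℕ, ∃ A ∈ C, N < A.n := by
      intro N
      by_contra h
      push_neg at h
      apply hinf
      have hsub : C ⊆ ⋃ m ∈ Finset.range (N + 1), {A : FinBinRel | A.n = m} := by
        intro A hA
        simp only [Set.mem_iUnion, Finset.mem_range, Set.mem_setOf_eq]
        exact ⟨A.n, Nat.lt_succ_of_le (h A hA), rfl⟩
      exact (Set.Finite.biUnion (Finset.finite_toSet _)
        (fun m _ => finBinRel_finite_of_size m)).subset hsub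
    have hK : ∀ N : ℕ, ∃ m, N < m ∧ Kirr m ∈ C := by
      intro N
      obtain ⟨A, hA, hAn⟩ := hlarge N
      refine ⟨A.n, hAn, hdc (Kirr A.n) A ?_ ?_ hA⟩
      · exact ⟨fun x h => h rfl, fun x y h => Ne.symm h⟩
      · refine ⟨id, Function.surjective_id, fun x y hxy heq => ?_⟩
        have heq' : x = y := heq
        exact (hC A hA).1 x (heq' ▸ hxy)
    choose g hg1 hg2 using hK
    set s : ℕ → ℕ := fun k => Nat.rec (g 0) (fun _ m => g m) k with hs
    have hs1 : ∀ k, Kirr (s k) ∈ C := by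
      intro k
      cases k with
      | zero => exact hg2 0
      | succ k => exact hg2 (s k)
    have hs2 : StrictMono s := strictMono_nat_of_lt_succ (fun k => hg1 (s k))
    obtain ⟨i, j, hij, f, hsurj, hhom⟩ := hwqo (fun k => Kirr (s k)) hs1
    have hinj : Function.Injective f := by
      intro x y hxy
      by_contra hne
      exact hhom x y hne hxy
    have : s j ≤ s i := Fintype.card_fin (s j) ▸ Fintype.card_fin (s i) ▸
      Fintype.card_le_of_injective f hinj
    exact absurd (hs2 hij) (not_lt.mpr this)
  · intro hfin
    intro f hf
    haveI : Finite ↥C := hfin.to_subtype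
    obtain ⟨a, b, hab, heq⟩ :=
      Finite.exists_ne_map_eq_of_infinite (fun i : ℕ => (⟨f i, hf i⟩ : ↥C))
    have heq' : f a = f b := congrArg Subtype.val heq
    rcases hab.lt_or_gt with h | h
    · exact ⟨a, b, h, heq' ▸ homle_refl (f a)⟩
    · exact ⟨b, a, h, heq' ▸ homle_refl (f b)⟩
end

section
/- For any finite set {O₁,…,O_k} of irreflexive graphs, the avoidance class Av(O₁,…,O_k) = {G irreflexive : no O_i is a surjective homomorphic image of G} is not well quasi-ordered under the surjective homomorphism ordering. -/
/-!
Complete irreflexive graphs form an antichain: a homomorphism out of `Kirr n` into a loopless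
graph cannot identify two vertices, since they are adjacent, so it is injective. For the same
reason no obstruction `O i` is a homomorphic image of `Kirr m` once `m` exceeds every `(O i).n`,
so all large complete graphs lie in the avoidance class.
-/

lemma irrGraph_kirr (n : ℕ) : IrrGraph (Kirr n) :=
  ⟨fun _ h => h rfl, fun _ _ h => Ne.symm h⟩

lemma injective_of_isHom_kirr {n : ℕ} {B : FinBinRel} (hB : ∀ x, ¬ B.rel x x)
    {f : Fin n → Fin B.n} (hf : IsHom (Kirr n) B f) : Function.Injective f := by
  intro x y hxy
  by_contra hne
  exact hB (f x) (hxy ▸ hf x y hne)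

lemma le_of_isHom_kirr {n : ℕ} {B : FinBinRel} (hB : ∀ x, ¬ B.rel x x)
    {f : Fin n → Fin B.n} (hf : IsHom (Kirr n) B f) : n ≤ B.n := by
  simpa using Fintype.card_le_of_injective f (injective_of_isHom_kirr hB hf)

lemma not_homLe_kirr {m : ℕ} {B : FinBinRel} (hB : ∀ x, ¬ B.rel x x) (hm : B.n < m) :
    ¬ HomLe B (Kirr m) := fun ⟨_, _, hf⟩ => (le_of_isHom_kirr hB hf).not_gt hm

/-- No class of irreflexive graphs defined by finitely many obstructions under the
surjective homomorphism ordering is well quasi-ordered. -/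
theorem stmt_7 (k : ℕ) (O : Fin k → FinBinRel) (hO : ∀ i, IrrGraph (O i)) :
    ¬ IsWqo HomLe {G | IrrGraph G ∧ ∀ i, ¬ HomLe (O i) G} := by
  intro hwqo
  set N := (Finset.univ.sup fun i => (O i).n) + 1
  have hN (i : Fin k) : (O i).n < N :=
    Nat.lt_succ_of_le (Finset.le_sup (f := fun i => (O i).n) (Finset.mem_univ i))
  obtain ⟨i, j, hij, hle⟩ := hwqo (fun m => Kirr (N + m))
    fun m => ⟨irrGraph_kirr _, fun i => not_homLe_kirr (hO i).1 ((hN i).trans_le (Nat.le_add_right N m))⟩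
  exact not_homLe_kirr (irrGraph_kirr _).1 (Nat.add_lt_add_left hij N) hle
end

section
/- Every proper surjective homomorphic image of a subcomplete reflexive graph N_{n,k} is a partial subcomplete graph N_{m,l} with 2l < m. -/
set_option maxHeartbeats 16000000 in
lemma matching_iso (H : FinBinRel)
    (hrefl : ∀ x, H.rel x x) (hsymm : ∀ x y, H.rel x y → H.rel y x)
    (hB : ∀ p q q' : Fin H.n, ¬ H.rel p q → ¬ H.rel p q' → q = q')
    (hU0 : ∃ p : Fin H.n, ∀ q, H.rel p q) :
    ∃ l, 2 * l < H.n ∧ BinIso H (Ngraph H.n l) := by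
  classical
  have hex : ∀ p : Fin H.n, ∃ q, (¬ H.rel p q ∨ ((∀ r, H.rel p r) ∧ q = p)) := by
    intro p
    by_cases h : ∃ q, ¬ H.rel p q
    · exact ⟨h.choose, Or.inl h.choose_spec⟩
    · push_neg at h; exact ⟨p, Or.inr ⟨h, rfl⟩⟩
  choose σ hσ using hex
  have hσpartner : ∀ p q, ¬ H.rel p q → σ p = q := by
    intro p q h
    rcases hσ p with h' | ⟨hall, _⟩
    · exact hB p _ q h' h
    · exact absurd (hall q) h
  have hσmatch : ∀ p q, ¬ H.rel p q → ¬ H.rel p (σ p) := by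
    intro p q h; rw [hσpartner p q h]; exact h
  have hσinv : ∀ p, ¬ H.rel p (σ p) → σ (σ p) = p := by
    intro p h
    exact hσpartner (σ p) p (fun h' => h (hsymm _ _ h'))
  have hσm' : ∀ p, ¬ H.rel p (σ p) → ¬ H.rel (σ p) (σ (σ p)) := by
    intro p h; rw [hσinv p h]; exact fun h' => h (hsymm _ _ h')
  have hσne : ∀ p, ¬ H.rel p (σ p) → p ≠ σ p := by
    intro p h he; rw [← he] at h; exact h (hrefl p)
  set L : Finset (Fin H.n) :=
    Finset.univ.filter (fun p => ¬ H.rel p (σ p) ∧ p < σ p) with hLdef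
  set U : Finset (Fin H.n) :=
    Finset.univ.filter (fun p => H.rel p (σ p)) with hUdef
  set l := L.card with hldef
  have hmemL : ∀ p : Fin H.n, p ∈ L ↔ ¬ H.rel p (σ p) ∧ p < σ p := by
    intro p; simp [hLdef]
  have hmemU : ∀ p : Fin H.n, p ∈ U ↔ H.rel p (σ p) := by
    intro p; simp [hUdef]
  -- σ is injective on L
  have hinjL : Set.InjOn σ L := by
    intro p hp q hq hpq
    rw [Finset.mem_coe, hmemL] at hp hq
    rw [← hσinv p hp.1, hpq, hσinv q hq.1]
  have hdisj1 : Disjoint L (L.image σ) := by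
    rw [Finset.disjoint_left]
    intro p hp hp'
    rw [hmemL] at hp
    obtain ⟨q, hq, hqp⟩ := Finset.mem_image.mp hp'
    rw [hmemL] at hq
    have hth : σ p = q := by rw [← hqp, hσinv q hq.1]
    have h1 : p < q := by rw [← hth]; exact hp.2
    have h2 : q < p := by rw [← hqp]; exact hq.2
    exact absurd h1 (not_lt.mpr (le_of_lt h2))
  have hdisj2 : Disjoint (L ∪ L.image σ) U := by
    rw [Finset.disjoint_left]
    intro p hp hpU
    rw [hmemU] at hpU
    rcases Finset.mem_union.mp hp with h | h
    · exact (hmemL p).mp h |>.1 hpU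
    · obtain ⟨q, hq, hqp⟩ := Finset.mem_image.mp h
      rw [hmemL] at hq
      have := hσm' q hq.1
      rw [hqp] at this
      exact this hpU
  have hcover : L ∪ L.image σ ∪ U = Finset.univ := by
    apply Finset.eq_univ_of_forall
    intro p
    by_cases h : H.rel p (σ p)
    · exact Finset.mem_union_right _ ((hmemU p).mpr h)
    · apply Finset.mem_union_left
      have hne := hσne p h
      rcases lt_or_gt_of_ne hne with hlt | hgt
      · exact Finset.mem_union_left _ ((hmemL p).mpr ⟨h, hlt⟩)
      · apply Finset.mem_union_right
        apply Finset.mem_image.mpr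
        refine ⟨σ p, (hmemL _).mpr ⟨hσm' p h, ?_⟩, hσinv p h⟩
        rw [hσinv p h]; exact hgt
  have hcardsum : 2 * l + U.card = H.n := by
    have h1 : (L ∪ L.image σ).card = 2 * l := by
      rw [Finset.card_union_of_disjoint hdisj1, Finset.card_image_of_injOn hinjL]
      omega
    have h2 : (L ∪ L.image σ ∪ U).card = H.n := by
      rw [hcover, Finset.card_univ, Fintype.card_fin]
    rw [Finset.card_union_of_disjoint hdisj2, h1] at h2
    exact h2
  have hUpos : 0 < U.card := by
    obtain ⟨p, hp⟩ := hU0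
    exact Finset.card_pos.mpr ⟨p, (hmemU p).mpr (hp (σ p))⟩
  have h2l : 2 * l < H.n := by omega
  have hUcard : U.card = H.n - 2 * l := by omega
  -- the inverse map of the isomorphism
  -- enumerations and the inverse map of the isomorphism
  obtain ⟨a, u, g, hamem, hainj, humem, huinj, hg1, hg2, hg3⟩ :
      ∃ (a : Fin l → Fin H.n) (u : Fin (H.n - 2 * l) → Fin H.n) (g : Fin H.n → Fin H.n),
        (∀ t, a t ∈ L) ∧ Function.Injective a ∧
        (∀ t, u t ∈ U) ∧ Function.Injective u ∧
        (∀ (j : Fin H.n) (t : Fin l), j.val = 2 * t.val → g j = a t) ∧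
        (∀ (j : Fin H.n) (t : Fin l), j.val = 2 * t.val + 1 → g j = σ (a t)) ∧
        (∀ (j : Fin H.n) (t : Fin (H.n - 2 * l)), j.val = 2 * l + t.val → g j = u t) := by
    refine ⟨fun t => (L.equivFin.symm t : {x // x ∈ L}).1,
      fun t => (U.equivFin.symm (Fin.cast hUcard.symm t) : {x // x ∈ U}).1,
      fun j =>
        if h : j.val < 2 * l then
          if j.val % 2 = 0 then (L.equivFin.symm ⟨j.val / 2, by omega⟩ : {x // x ∈ L}).1
          else σ (L.equivFin.symm ⟨j.val / 2, by omega⟩ : {x // x ∈ L}).1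
        else (U.equivFin.symm (Fin.cast hUcard.symm ⟨j.val - 2 * l, by
          have := j.isLt; omega⟩) : {x // x ∈ U}).1,
      ?_, ?_, ?_, ?_, ?_, ?_, ?_⟩
    · intro t; exact (L.equivFin.symm t).2
    · intro s t hst
      exact L.equivFin.symm.injective (Subtype.ext hst)
    · intro t; exact (U.equivFin.symm _).2
    · intro s t hst
      have h1 := U.equivFin.symm.injective (Subtype.ext hst)
      have h2 := congrArg Fin.val h1
      simp only [Fin.coe_cast] at h2
      exact Fin.ext h2
    · intro j t ht
      have hlt : j.val < 2 * l := by have := t.isLt; omega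
      simp only [dif_pos hlt, if_pos (show j.val % 2 = 0 by omega)]
      have he : (⟨j.val / 2, by omega⟩ : Fin l) = t := Fin.ext (by simp; omega)
      rw [he]
    · intro j t ht
      have hlt : j.val < 2 * l := by have := t.isLt; omega
      simp only [dif_pos hlt, if_neg (show ¬ j.val % 2 = 0 by omega)]
      have he : (⟨j.val / 2, by omega⟩ : Fin l) = t := Fin.ext (by simp; omega)
      rw [he]
    · intro j t ht
      have hlt : ¬ j.val < 2 * l := by omega
      simp only [dif_neg hlt]
      have he : (⟨j.val - 2 * l, by have := j.isLt; omega⟩ : Fin (H.n - 2 * l))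
          = t := Fin.ext (by simp; omega)
      rw [he]
  -- matched/unmatched classification of values of g
  have hgmatched : ∀ (j : Fin H.n), j.val < 2 * l → ¬ H.rel (g j) (σ (g j)) := by
    intro j hlt
    rcases Nat.mod_two_eq_zero_or_one j.val with hev | hev
    · obtain ⟨t, ht⟩ : ∃ t : Fin l, j.val = 2 * t.val := ⟨⟨j.val / 2, by omega⟩, by simp; omega⟩
      rw [hg1 j t ht]
      exact ((hmemL _).mp (hamem t)).1
    · obtain ⟨t, ht⟩ : ∃ t : Fin l, j.val = 2 * t.val + 1 :=
        ⟨⟨j.val / 2, by omega⟩, by simp; omega⟩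
      rw [hg2 j t ht]
      exact hσm' _ ((hmemL _).mp (hamem t)).1
  have hgunmatched : ∀ (j : Fin H.n), ¬ j.val < 2 * l → H.rel (g j) (σ (g j)) := by
    intro j hlt
    obtain ⟨t, ht⟩ : ∃ t : Fin (H.n - 2 * l), j.val = 2 * l + t.val :=
      ⟨⟨j.val - 2 * l, by have := j.isLt; omega⟩, by simp; omega⟩
    rw [hg3 j t ht]
    exact (hmemU _).mp (humem t)
  have hginj : Function.Injective g := by
    intro i j hij
    by_cases hi : i.val < 2 * l <;> by_cases hj : j.val < 2 * l
    · rcases Nat.mod_two_eq_zero_or_one i.val with hei | hei <;>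
        rcases Nat.mod_two_eq_zero_or_one j.val with hej | hej
      · obtain ⟨ti, hti⟩ : ∃ t : Fin l, i.val = 2 * t.val :=
          ⟨⟨i.val / 2, by omega⟩, by simp; omega⟩
        obtain ⟨tj, htj⟩ : ∃ t : Fin l, j.val = 2 * t.val :=
          ⟨⟨j.val / 2, by omega⟩, by simp; omega⟩
        rw [hg1 i ti hti, hg1 j tj htj] at hij
        have := congrArg Fin.val (hainj hij)
        apply Fin.ext; omega
      · obtain ⟨ti, hti⟩ : ∃ t : Fin l, i.val = 2 * t.val :=
          ⟨⟨i.val / 2, by omega⟩, by simp; omega⟩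
        obtain ⟨tj, htj⟩ : ∃ t : Fin l, j.val = 2 * t.val + 1 :=
          ⟨⟨j.val / 2, by omega⟩, by simp; omega⟩
        rw [hg1 i ti hti, hg2 j tj htj] at hij
        have hxL := (hmemL _).mp (hamem ti)
        have hyL := (hmemL _).mp (hamem tj)
        have h1 : σ (a ti) = a tj := by rw [hij, hσinv _ hyL.1]
        have h2 : a ti < a tj := h1 ▸ hxL.2
        have h3 : a tj < a ti := by
          have := hyL.2; rw [← hij] at this; exact this
        exact absurd h2 (not_lt.mpr (le_of_lt h3))
      · obtain ⟨ti, hti⟩ : ∃ t : Fin l, i.val = 2 * t.val + 1 :=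
          ⟨⟨i.val / 2, by omega⟩, by simp; omega⟩
        obtain ⟨tj, htj⟩ : ∃ t : Fin l, j.val = 2 * t.val :=
          ⟨⟨j.val / 2, by omega⟩, by simp; omega⟩
        rw [hg2 i ti hti, hg1 j tj htj] at hij
        have hxL := (hmemL _).mp (hamem ti)
        have hyL := (hmemL _).mp (hamem tj)
        have h1 : σ (a tj) = a ti := by rw [← hij, hσinv _ hxL.1]
        have h2 : a tj < a ti := h1 ▸ hyL.2
        have h3 : a ti < a tj := by
          have := hxL.2; rw [hij] at this; exact this
        exact absurd h2 (not_lt.mpr (le_of_lt h3))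
      · obtain ⟨ti, hti⟩ : ∃ t : Fin l, i.val = 2 * t.val + 1 :=
          ⟨⟨i.val / 2, by omega⟩, by simp; omega⟩
        obtain ⟨tj, htj⟩ : ∃ t : Fin l, j.val = 2 * t.val + 1 :=
          ⟨⟨j.val / 2, by omega⟩, by simp; omega⟩
        rw [hg2 i ti hti, hg2 j tj htj] at hij
        have hxL := (hmemL _).mp (hamem ti)
        have hyL := (hmemL _).mp (hamem tj)
        have hxy : a ti = a tj := by
          rw [← hσinv _ hxL.1, hij, hσinv _ hyL.1]
        have := congrArg Fin.val (hainj hxy)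
        apply Fin.ext; omega
    · have h1 := hgmatched i hi
      rw [hij] at h1
      exact absurd (hgunmatched j hj) h1
    · have h1 := hgunmatched i hi
      rw [hij] at h1
      exact absurd h1 (hgmatched j hj)
    · obtain ⟨ti, hti⟩ : ∃ t : Fin (H.n - 2 * l), i.val = 2 * l + t.val :=
        ⟨⟨i.val - 2 * l, by have := i.isLt; omega⟩, by simp; omega⟩
      obtain ⟨tj, htj⟩ : ∃ t : Fin (H.n - 2 * l), j.val = 2 * l + t.val :=
        ⟨⟨j.val - 2 * l, by have := j.isLt; omega⟩, by simp; omega⟩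
      rw [hg3 i ti hti, hg3 j tj htj] at hij
      have := congrArg Fin.val (huinj hij)
      apply Fin.ext; omega
  have hgbij : Function.Bijective g := (Finite.injective_iff_bijective).mp hginj
  -- relation characterization
  have hgrel : ∀ i j : Fin H.n, ¬ H.rel (g i) (g j) ↔
      ∃ t, t < l ∧ ((i.val = 2 * t ∧ j.val = 2 * t + 1) ∨
        (j.val = 2 * t ∧ i.val = 2 * t + 1)) := by
    intro i j
    constructor
    · intro h
      have hji : σ (g i) = g j := hσpartner _ _ h
      have hi : i.val < 2 * l := by
        by_contra hi
        have := hgunmatched i hi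
        rw [hji] at this
        exact h this
      have hj : j.val < 2 * l := by
        by_contra hj
        have h' : ¬ H.rel (g j) (g i) := fun h' => h (hsymm _ _ h')
        have hij' : σ (g j) = g i := hσpartner _ _ h'
        have := hgunmatched j hj
        rw [hij'] at this
        exact h' this
      rcases Nat.mod_two_eq_zero_or_one i.val with hei | hei <;>
        rcases Nat.mod_two_eq_zero_or_one j.val with hej | hej
      · -- both even: impossible
        exfalso
        obtain ⟨ti, hti⟩ : ∃ t : Fin l, i.val = 2 * t.val :=
          ⟨⟨i.val / 2, by omega⟩, by simp; omega⟩
        obtain ⟨tj, htj⟩ : ∃ t : Fin l, j.val = 2 * t.val :=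
          ⟨⟨j.val / 2, by omega⟩, by simp; omega⟩
        rw [hg1 i ti hti, hg1 j tj htj] at hji
        have hxL := (hmemL _).mp (hamem ti)
        have hyL := (hmemL _).mp (hamem tj)
        have h2 : a ti < a tj := hji ▸ hxL.2
        have h3 : a tj < a ti := by
          have h4 : σ (a tj) = a ti := by rw [← hji, hσinv _ hxL.1]
          exact h4 ▸ hyL.2
        exact absurd h2 (not_lt.mpr (le_of_lt h3))
      · -- i even, j odd
        obtain ⟨ti, hti⟩ : ∃ t : Fin l, i.val = 2 * t.val :=
          ⟨⟨i.val / 2, by omega⟩, by simp; omega⟩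
        obtain ⟨tj, htj⟩ : ∃ t : Fin l, j.val = 2 * t.val + 1 :=
          ⟨⟨j.val / 2, by omega⟩, by simp; omega⟩
        rw [hg1 i ti hti, hg2 j tj htj] at hji
        have hxL := (hmemL _).mp (hamem ti)
        have hyL := (hmemL _).mp (hamem tj)
        have hxy : a ti = a tj := by
          rw [← hσinv _ hxL.1, hji, hσinv _ hyL.1]
        have := congrArg Fin.val (hainj hxy)
        exact ⟨ti.val, ti.isLt, Or.inl ⟨hti, by omega⟩⟩
      · -- i odd, j even
        obtain ⟨ti, hti⟩ : ∃ t : Fin l, i.val = 2 * t.val + 1 :=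
          ⟨⟨i.val / 2, by omega⟩, by simp; omega⟩
        obtain ⟨tj, htj⟩ : ∃ t : Fin l, j.val = 2 * t.val :=
          ⟨⟨j.val / 2, by omega⟩, by simp; omega⟩
        rw [hg2 i ti hti, hg1 j tj htj] at hji
        have hxL := (hmemL _).mp (hamem ti)
        have hyL := (hmemL _).mp (hamem tj)
        have hxy : a ti = a tj := by
          rw [← hσinv _ hxL.1, ← hji, hσinv _ hxL.1]
        have := congrArg Fin.val (hainj hxy)
        exact ⟨tj.val, tj.isLt, Or.inr ⟨htj, by omega⟩⟩
      · -- both odd: impossible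
        exfalso
        obtain ⟨ti, hti⟩ : ∃ t : Fin l, i.val = 2 * t.val + 1 :=
          ⟨⟨i.val / 2, by omega⟩, by simp; omega⟩
        obtain ⟨tj, htj⟩ : ∃ t : Fin l, j.val = 2 * t.val + 1 :=
          ⟨⟨j.val / 2, by omega⟩, by simp; omega⟩
        rw [hg2 i ti hti, hg2 j tj htj] at hji
        have hxL := (hmemL _).mp (hamem ti)
        have hyL := (hmemL _).mp (hamem tj)
        -- hji : σ (σ (a ti)) = σ (a tj), so a ti = σ (a tj)
        rw [hσinv _ hxL.1] at hji
        have h2 : a tj < a ti := by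
          have := hyL.2; rw [← hji] at this; exact this
        have h3 : a ti < a tj := by
          have h4 : σ (a ti) = a tj := by rw [hji, hσinv _ hyL.1]
          exact h4 ▸ hxL.2
        exact absurd h2 (not_lt.mpr (le_of_lt h3))
    · rintro ⟨t, ht, ⟨hi, hj⟩ | ⟨hj, hi⟩⟩
      · rw [hg1 i ⟨t, ht⟩ hi, hg2 j ⟨t, ht⟩ hj]
        exact ((hmemL _).mp (hamem _)).1
      · rw [hg2 i ⟨t, ht⟩ hi, hg1 j ⟨t, ht⟩ hj]
        intro h
        exact ((hmemL _).mp (hamem _)).1 (hsymm _ _ h)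
  refine ⟨l, h2l, ?_⟩
  refine ⟨(Equiv.ofBijective g hgbij).symm, ?_⟩
  intro x y
  have hx : g ((Equiv.ofBijective g hgbij).symm x) = x :=
    (Equiv.ofBijective g hgbij).apply_symm_apply x
  have hy : g ((Equiv.ofBijective g hgbij).symm y) = y :=
    (Equiv.ofBijective g hgbij).apply_symm_apply y
  have hrel := hgrel ((Equiv.ofBijective g hgbij).symm x) ((Equiv.ofBijective g hgbij).symm y)
  rw [hx, hy] at hrel
  show H.rel x y ↔ ¬ _
  constructor
  · intro h hc
    exact (hrel.mpr hc) h
  · intro h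
    by_contra hc
    exact h (hrel.mp hc)

/-- Every proper surjective homomorphic image of a subcomplete reflexive graph `N_{n,k}`
is (isomorphic to) a partial subcomplete graph `N_{m,l}` with `2l < m`. -/
theorem stmt_8 (n k : ℕ) (hkn : 2 * k ≤ n) (H : FinBinRel) (hH : ReflGraph H)
    (f : Fin n → Fin H.n) (hsurj : Function.Surjective f)
    (hhom : IsHom (Ngraph n k) H f) (hproper : ¬ Function.Injective f) :
    ∃ m l, 2 * l < m ∧ BinIso H (Ngraph m l) := by 
  have hB : ∀ p q q' : Fin H.n, ¬ H.rel p q → ¬ H.rel p q' → q = q' := by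
    intro p q q' h1 h2
    obtain ⟨x, hx⟩ := hsurj p
    obtain ⟨y, hy⟩ := hsurj q
    obtain ⟨y', hy'⟩ := hsurj q'
    have hn1 : ¬ (Ngraph n k).rel x y := fun hr => h1 (hx ▸ hy ▸ hhom x y hr)
    have hn2 : ¬ (Ngraph n k).rel x y' := fun hr => h2 (hx ▸ hy' ▸ hhom x y' hr)
    simp only [Ngraph, not_not] at hn1 hn2
    obtain ⟨m1, hm1, hc1⟩ := hn1
    obtain ⟨m2, hm2, hc2⟩ := hn2
    rw [← hy, ← hy']
    congr 1
    apply Fin.ext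
    rcases hc1 with ⟨ha, hb⟩ | ⟨ha, hb⟩ <;> rcases hc2 with ⟨hc, hd⟩ | ⟨hc, hd⟩ <;> omega
  have hU0 : ∃ p : Fin H.n, ∀ q, H.rel p q := by
    obtain ⟨x, y, hxy, hne⟩ := Function.not_injective_iff.mp hproper
    refine ⟨f x, fun q => ?_⟩
    by_contra hq
    obtain ⟨z, hz⟩ := hsurj q
    have hn1 : ¬ (Ngraph n k).rel x z := fun hr => hq (hz ▸ hhom x z hr)
    have hn2 : ¬ (Ngraph n k).rel y z := fun hr => hq (by
      have := hhom y z hr; rwa [← hxy, hz] at this)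
    simp only [Ngraph, not_not] at hn1 hn2
    obtain ⟨m1, hm1, hc1⟩ := hn1
    obtain ⟨m2, hm2, hc2⟩ := hn2
    apply hne
    apply Fin.ext
    rcases hc1 with ⟨ha, hb⟩ | ⟨ha, hb⟩ <;> rcases hc2 with ⟨hc, hd⟩ | ⟨hc, hd⟩ <;> omega
  obtain ⟨l, hl, hiso⟩ := matching_iso H hH.1 hH.2 hB hU0
  exact ⟨H.n, l, hl, hiso⟩
end

section
/- The family {N_{2k,k} : k = 1,2,3,…} of proper subcomplete reflexive graphs is an infinite antichain under the surjective homomorphism ordering on reflexive graphs. -/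

lemma nonedge_unique {n k : ℕ} {x y z : Fin n}
    (hx : ¬ (Ngraph n k).rel x z) (hy : ¬ (Ngraph n k).rel y z) : x = y := by
  simp only [Ngraph, not_not] at hx hy
  obtain ⟨m, hm, h⟩ := hx
  obtain ⟨m', hm', h'⟩ := hy
  apply Fin.ext
  omega

lemma partner_exists {k : ℕ} (hk : 1 ≤ k) (p : Fin (2 * k)) :
    ∃ q : Fin (2 * k), ¬ (Ngraph (2 * k) k).rel p q := by
  by_cases h : p.val % 2 = 0
  · refine ⟨⟨p.val + 1, by omega⟩, ?_⟩
    simp only [Ngraph, not_not, Fin.val_mk]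
    exact ⟨p.val / 2, by omega, Or.inl ⟨by omega, by omega⟩⟩
  · refine ⟨⟨p.val - 1, by omega⟩, ?_⟩
    simp only [Ngraph, not_not, Fin.val_mk]
    exact ⟨p.val / 2, by omega, Or.inr ⟨by omega, by omega⟩⟩

/-- The family `{N_{2k,k} : k ≥ 1}` of proper subcomplete reflexive graphs is an infinite
antichain under the surjective homomorphism ordering. -/
theorem stmt_9 :
    ({D | ∃ k, 1 ≤ k ∧ D = Ngraph (2 * k) k} : Set FinBinRel).Infinite ∧
    (∀ k l : ℕ, 1 ≤ k → 1 ≤ l → k ≠ l →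
      ¬ HomLe (Ngraph (2 * k) k) (Ngraph (2 * l) l)) := by
  constructor
  · apply Set.infinite_of_injective_forall_mem
      (f := fun i : ℕ => Ngraph (2 * (i + 1)) (i + 1))
    · intro a b hab
      have h : 2 * (a + 1) = 2 * (b + 1) := congrArg FinBinRel.n hab
      omega
    · intro i
      exact ⟨i + 1, by omega, rfl⟩
  · rintro k l hk hl hne ⟨f, hsurj, hhom⟩
    have hinj : Function.Injective f := by
      intro x y hxy
      obtain ⟨q, hq⟩ := partner_exists hk (f x)
      obtain ⟨z, hz⟩ := hsurj q
      have h1 : ¬ (Ngraph (2 * l) l).rel x z := fun h => hq (hz ▸ hhom x z h)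
      have h2 : ¬ (Ngraph (2 * l) l).rel y z := fun h => hq (hz ▸ hxy ▸ hhom y z h)
      exact nonedge_unique h1 h2
    have hcard : 2 * l = 2 * k := by
      have := Fintype.card_of_bijective ⟨hinj, hsurj⟩
      simpa [Ngraph] using this
    omega
end

section
/- Let G be a reflexive graph. The avoidance class Av(G) within all finite reflexive graphs, under the surjective homomorphism ordering, is well quasi-ordered if and only if G is isomorphic to a partial subcomplete graph N_{n,k} with 2k < n. -/
/-!
If `G ≅ N_{n,k}` with `2k < n`, a reflexive graph `H` avoiding `G` either has fewer than `n`
vertices or has no `k` disjoint non-edges; either way some set `S` of at most `n` vertices leaves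
all other vertices pairwise adjacent (take `S` spanned by a maximal family of disjoint non-edges).
Label every vertex by its position in `S` and its adjacencies to `S`. Two such graphs with cores
of equal size, the same occurring labels, and label multiplicities compared pointwise admit a
label-preserving surjection, which is a homomorphism; Dickson's lemma then gives the wqo.

Conversely, the fibres of a surjective homomorphism onto a graph without universal vertices lie
in common non-neighbourhoods, which bounds the size of the source. Hence if some vertex of `G` has
two non-neighbours the graphs `N_{2m,m}` form an infinite antichain in `Av(G)`, and if no vertex
of `G` is universal the complements of long cycles do. Otherwise the non-edges of `G` form a
matching missing some vertex, and `G ≅ N_{n,k}` with `2k < n`, because involutions with equally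
many fixed points are conjugate.
-/

open Finset Function

theorem HomLe.trans {A B C : FinBinRel} (hAB : HomLe A B) (hBC : HomLe B C) : HomLe A C := by
  obtain ⟨f, hf, hfA⟩ := hAB
  obtain ⟨g, hg, hgB⟩ := hBC
  exact ⟨f ∘ g, hf.comp hg, fun x y h => hfA _ _ (hgB x y h)⟩

theorem BinIso.symm {A B : FinBinRel} (h : BinIso A B) : BinIso B A := by
  obtain ⟨e, he⟩ := h
  exact ⟨e.symm, fun x y => by rw [he, e.apply_symm_apply, e.apply_symm_apply]⟩

theorem BinIso.homLe {A B : FinBinRel} (h : BinIso A B) : HomLe B A := by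
  obtain ⟨e, he⟩ := h
  exact ⟨e, e.surjective, fun x y => (he x y).mp⟩

theorem homLe_of_rel_imp {A : FinBinRel} {r : Fin A.n → Fin A.n → Prop}
    (h : ∀ x y, A.rel x y → r x y) : HomLe ⟨A.n, r⟩ A :=
  ⟨id, surjective_id, h⟩

theorem isWqo_iff_partiallyWellOrderedOn {r : FinBinRel → FinBinRel → Prop}
    {C : Set FinBinRel} : IsWqo r C ↔ C.PartiallyWellOrderedOn r :=
  Set.partiallyWellOrderedOn_iff_exists_lt.symm

theorem IsWqo.mono {r : FinBinRel → FinBinRel → Prop} {C D : Set FinBinRel} (h : IsWqo r D)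
    (hCD : C ⊆ D) : IsWqo r C :=
  fun f hf => h f fun i => hCD (hf i)

theorem isWqo_of_wellQuasiOrdered {r : FinBinRel → FinBinRel → Prop} {C : Set FinBinRel}
    {α : Type*} {s : α → α → Prop} (hs : WellQuasiOrdered s) (P : FinBinRel → α → Prop)
    (hP : ∀ H ∈ C, ∃ a, P H a) (hr : ∀ A H a b, P A a → P H b → s a b → r A H) :
    IsWqo r C := by
  intro f hf
  choose a ha using fun i => hP (f i) (hf i)
  obtain ⟨i, j, hij, h⟩ := hs a
  exact ⟨i, j, hij, hr _ _ _ _ (ha i) (ha j) h⟩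

open Classical in
theorem le_mul_of_homLe {A B : FinBinRel} (h : HomLe A B) {s c : ℕ}
    (hA : ∀ p, ∃ Q : Finset (Fin A.n), #Q = s ∧ ∀ q ∈ Q, ¬A.rel p q)
    (hB : ∀ T : Finset (Fin B.n), #T = s → #{u | ∀ v ∈ T, ¬B.rel u v} ≤ c) :
    B.n ≤ c * A.n := by
  obtain ⟨f, hf, hfh⟩ := h
  -- the fibre over `p` is not adjacent to any preimage of a non-neighbour of `p`
  have hfib : ∀ p, #{u | f u = p} ≤ c := by
    intro p
    obtain ⟨Q, hQ, hpQ⟩ := hA p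
    refine le_trans (card_le_card fun u hu => ?_) (hB (Q.image (surjInv hf)) ?_)
    · simp only [mem_filter, mem_univ, true_and] at hu ⊢
      intro v hv
      obtain ⟨q, hq, rfl⟩ := mem_image.mp hv
      exact fun h => hpQ q hq (by simpa [hu, surjInv_eq hf] using hfh _ _ h)
    · rw [card_image_of_injective _ (injective_surjInv hf), hQ]
  simpa using card_le_mul_card_image_of_maps_to (s := univ) (t := univ)
    (fun u _ => mem_univ (f u)) c (fun p _ => hfib p)

open Classical in
theorem le_mul_of_homLe_of_exists_not_rel {A B : FinBinRel} (h : HomLe A B) {c : ℕ}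
    (hA : ∀ p, ∃ q, ¬A.rel p q) (hB : ∀ v, #{u | ¬B.rel u v} ≤ c) : B.n ≤ c * A.n := by
  refine le_mul_of_homLe h (s := 1) (fun p => ?_) fun T hT => ?_
  · obtain ⟨q, hq⟩ := hA p
    exact ⟨{q}, card_singleton q, by simpa using hq⟩
  · obtain ⟨v, rfl⟩ := card_eq_one.mp hT
    simpa using hB v

/-- The non-edges of `A` form a matching. -/
def IsCoMatching (A : FinBinRel) : Prop :=
  ∀ x y z, ¬A.rel x y → ¬A.rel x z → y = z

open Classical in
noncomputable def nonUniversal (A : FinBinRel) : Finset (Fin A.n) :=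
  {x | ∃ y, ¬A.rel x y}

theorem mem_nonUniversal {A : FinBinRel} {x : Fin A.n} :
    x ∈ nonUniversal A ↔ ∃ y, ¬A.rel x y := by
  simp [nonUniversal]

theorem IsCoMatching.of_homLe {A B : FinBinRel} (h : HomLe A B) (hB : IsCoMatching B) :
    IsCoMatching A := by
  obtain ⟨f, hf, hfh⟩ := h
  intro x y z hxy hxz
  obtain ⟨u, rfl⟩ := hf x
  obtain ⟨v, rfl⟩ := hf y
  obtain ⟨w, rfl⟩ := hf z
  rw [hB u v w (fun h => hxy (hfh _ _ h)) (fun h => hxz (hfh _ _ h))]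

open Classical in
theorem IsCoMatching.card_not_rel_le_one {A : FinBinRel} (hA : ReflGraph A)
    (hM : IsCoMatching A) (v : Fin A.n) : #{u | ¬A.rel u v} ≤ 1 := by
  refine card_le_one.mpr fun u hu u' hu' => ?_
  simp only [mem_filter, mem_univ, true_and] at hu hu'
  exact hM v u u' (fun h => hu (hA.2 _ _ h)) (fun h => hu' (hA.2 _ _ h))

theorem Function.Involutive.toPerm_sq {α : Type*} {f : α → α} (h : Involutive f) :
    h.toPerm ^ 2 = 1 := by
  ext
  simp [sq, h _]

theorem Equiv.Perm.two_mul_card_cycleType_of_sq_eq_one {α : Type*} [Fintype α] [DecidableEq α]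
    {σ : Perm α} (hσ : σ ^ 2 = 1) : 2 * σ.cycleType.card = #σ.support := by
  rw [← σ.sum_cycleType, σ.cycleType_of_pow_prime_eq_one hσ, Multiset.sum_replicate,
    Multiset.card_replicate, smul_eq_mul, mul_comm]

theorem Equiv.Perm.isConj_of_sq_eq_one {α : Type*} [Fintype α] [DecidableEq α]
    {σ τ : Perm α} (hσ : σ ^ 2 = 1) (hτ : τ ^ 2 = 1) (h : #σ.support = #τ.support) :
    IsConj σ τ := by
  rw [isConj_iff_cycleType_eq, σ.cycleType_of_pow_prime_eq_one hσ,
    τ.cycleType_of_pow_prime_eq_one hτ]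
  have := σ.two_mul_card_cycleType_of_sq_eq_one hσ
  have := τ.two_mul_card_cycleType_of_sq_eq_one hτ
  congr 1
  omega

section CoPartner

variable {A : FinBinRel}

open Classical in
noncomputable def coPartner (A : FinBinRel) (x : Fin A.n) : Fin A.n :=
  if h : ∃ y, ¬A.rel x y then h.choose else x

theorem not_rel_iff_coPartner (hA : ReflGraph A) (hM : IsCoMatching A) {x y : Fin A.n} :
    ¬A.rel x y ↔ coPartner A x = y ∧ x ≠ y := by
  unfold coPartner
  constructor
  · intro h
    rw [dif_pos ⟨y, h⟩]
    exact ⟨hM _ _ _ (⟨y, h⟩ : ∃ y, ¬A.rel x y).choose_spec h,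
      fun hxy => h (hxy ▸ hA.1 x)⟩
  · rintro ⟨h, hxy⟩
    split_ifs at h with hx
    · exact h ▸ hx.choose_spec
    · exact absurd h hxy

theorem rel_iff_coPartner (hA : ReflGraph A) (hM : IsCoMatching A) {x y : Fin A.n} :
    A.rel x y ↔ (coPartner A x = y → x = y) := by
  rw [← not_iff_not, not_rel_iff_coPartner hA hM]
  tauto

theorem coPartner_involutive (hA : ReflGraph A) (hM : IsCoMatching A) :
    Involutive (coPartner A) := by
  intro x
  by_cases hx : coPartner A x = x
  · rw [hx, hx]
  · have h := (not_rel_iff_coPartner hA hM).mpr ⟨rfl, Ne.symm hx⟩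
    exact ((not_rel_iff_coPartner hA hM).mp fun h' => h (hA.2 _ _ h')).1

theorem coPartner_ne_self_iff (hA : ReflGraph A) (hM : IsCoMatching A) {x : Fin A.n} :
    coPartner A x ≠ x ↔ x ∈ nonUniversal A := by
  rw [mem_nonUniversal]
  constructor
  · intro hx
    exact ⟨_, (not_rel_iff_coPartner hA hM).mpr ⟨rfl, Ne.symm hx⟩⟩
  · rintro ⟨y, hy⟩
    obtain ⟨rfl, hxy⟩ := (not_rel_iff_coPartner hA hM).mp hy
    exact Ne.symm hxy

theorem card_support_coPartner (hA : ReflGraph A) (hM : IsCoMatching A) :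
    #(coPartner_involutive hA hM).toPerm.support = #(nonUniversal A) := by
  congr 1
  ext
  simp [coPartner_ne_self_iff hA hM]

end CoPartner

theorem IsCoMatching.binIso {A B : FinBinRel} (hA : ReflGraph A) (hAM : IsCoMatching A)
    (hB : ReflGraph B) (hBM : IsCoMatching B) (hn : A.n = B.n)
    (hcard : #(nonUniversal A) = #(nonUniversal B)) : BinIso A B := by
  obtain ⟨n, r⟩ := A
  obtain ⟨m, s⟩ := B
  obtain rfl : n = m := hn
  obtain ⟨c, hc⟩ := isConj_iff.mp <| Equiv.Perm.isConj_of_sq_eq_one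
    (coPartner_involutive hA hAM).toPerm_sq (coPartner_involutive hB hBM).toPerm_sq
    (by rw [card_support_coPartner hA hAM, card_support_coPartner hB hBM, hcard])
  have hcσ : ∀ x, coPartner ⟨n, s⟩ (c x) = c (coPartner ⟨n, r⟩ x) := fun x => by
    simpa using congr($hc.symm (c x))
  refine ⟨c, fun x y => ?_⟩
  rw [rel_iff_coPartner hA hAM, rel_iff_coPartner hB hBM, hcσ, c.injective.eq_iff,
    c.injective.eq_iff]

section Ngraph

theorem ngraph_reflGraph (n k : ℕ) : ReflGraph (Ngraph n k) := by
  refine ⟨fun x => ?_, fun x y h => ?_⟩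
  · rintro ⟨m, -, h | h⟩ <;> omega
  · rintro ⟨m, hm, h'⟩
    exact h ⟨m, hm, h'.symm⟩

theorem ngraph_isCoMatching (n k : ℕ) : IsCoMatching (Ngraph n k) := by
  intro x y z hxy hxz
  simp only [Ngraph, not_not] at hxy hxz
  grind

theorem mem_nonUniversal_ngraph {n k : ℕ} (h : 2 * k ≤ n) {i : Fin (Ngraph n k).n} :
    i ∈ nonUniversal (Ngraph n k) ↔ i.val < 2 * k := by
  rw [mem_nonUniversal]
  simp only [Ngraph, not_not]
  constructor
  · rintro ⟨j, m, hm, hij⟩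
    omega
  · intro hi
    refine ⟨⟨if i.val % 2 = 0 then i.val + 1 else i.val - 1, by split_ifs <;> omega⟩,
      i.val / 2, by omega, ?_⟩
    split_ifs <;> simp only <;> omega

theorem card_nonUniversal_ngraph {n k : ℕ} (h : 2 * k ≤ n) :
    #(nonUniversal (Ngraph n k)) = 2 * k := by
  have : nonUniversal (Ngraph n k) = ({i | i.val < 2 * k} : Finset (Fin (Ngraph n k).n)) := by
    ext i
    simp [mem_nonUniversal_ngraph h]
  rw [this, Fin.card_filter_val_lt]
  exact min_eq_right h

theorem homLe_ngraph_ngraph {n m k k' : ℕ} (hk : k ≤ k') (hn : 2 * k < n) (hm : n ≤ m) :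
    HomLe (Ngraph n k) (Ngraph m k') := by
  refine ⟨fun i : Fin m => (⟨min i.val (n - 1), by omega⟩ : Fin n),
    fun j : Fin n => ⟨⟨j.val, j.isLt.trans_le hm⟩, ?_⟩, ?_⟩
  · ext
    simp only
    omega
  · intro x y hxy
    simp only [Ngraph, not_exists] at hxy ⊢
    intro c hc
    have := hxy c (by omega)
    omega

end Ngraph

theorem IsCoMatching.exists_binIso_ngraph {A : FinBinRel} (hA : ReflGraph A)
    (hM : IsCoMatching A) : ∃ k, 2 * k = #(nonUniversal A) ∧ BinIso A (Ngraph A.n k) := by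
  have hk := Equiv.Perm.two_mul_card_cycleType_of_sq_eq_one (coPartner_involutive hA hM).toPerm_sq
  rw [card_support_coPartner hA hM] at hk
  have hkn : 2 * _ ≤ A.n := hk ▸ (card_le_univ _).trans_eq (Fintype.card_fin _)
  refine ⟨_, hk, hM.binIso hA (ngraph_reflGraph _ _) (ngraph_isCoMatching _ _) rfl ?_⟩
  rw [card_nonUniversal_ngraph hkn, hk]

theorem not_isWqo_avoid_of_not_isCoMatching {G : FinBinRel} (hG : ¬IsCoMatching G) :
    ¬IsWqo HomLe {H | ReflGraph H ∧ ¬HomLe G H} := by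
  intro hwqo
  obtain ⟨i, j, hij, hle⟩ := hwqo (fun i => Ngraph (2 * (i + 1)) (i + 1)) fun i =>
    ⟨ngraph_reflGraph _ _, fun h => hG ((ngraph_isCoMatching _ _).of_homLe h)⟩
  have := le_mul_of_homLe_of_exists_not_rel hle (c := 1)
    (fun p => mem_nonUniversal.mp ((mem_nonUniversal_ngraph le_rfl).mpr p.isLt))
    ((ngraph_isCoMatching _ _).card_not_rel_le_one (ngraph_reflGraph _ _))
  simp only [Ngraph, one_mul] at this
  omega

def coCycle (L : ℕ) [NeZero L] : FinBinRel :=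
  ⟨L, fun i j => j ≠ i + 1 ∧ i ≠ j + 1⟩

theorem coCycle_n (L : ℕ) [NeZero L] : (coCycle L).n = L := rfl

section CoCycle

open Fin.CommRing

variable {L : ℕ} [NeZero L]

theorem Fin.natCast_ne_zero_of_lt {a : ℕ} (ha : 0 < a) (h : a < L) : (a : Fin L) ≠ 0 := by
  rw [Ne, Fin.natCast_eq_zero]
  exact fun hd => (Nat.le_of_dvd ha hd).not_gt h

theorem coCycle_reflGraph (hL : 5 ≤ L) : ReflGraph (coCycle L) := by
  have : (1 : Fin L) ≠ 0 := by simpa using Fin.natCast_ne_zero_of_lt (L := L) one_pos (by omega)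
  exact ⟨fun i : Fin L => ⟨left_eq_add.not.mpr this, left_eq_add.not.mpr this⟩,
    fun i j h => h.symm⟩

open Classical in
theorem card_not_rel_coCycle_le (v : Fin (coCycle L).n) : #{u | ¬(coCycle L).rel u v} ≤ 2 := by
  change Fin L at v
  refine (card_le_card fun u hu => ?_).trans (card_insert_le (v + 1) {v - 1})
  replace hu : ¬(coCycle L).rel u v := (mem_filter.mp hu).2
  change Fin L at u
  simp only [coCycle, not_and_or, not_not] at hu
  show u ∈ ({v + 1, v - 1} : Finset (Fin L))
  simp only [mem_insert, mem_singleton]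
  grind

theorem exists_pair_not_rel_coCycle (hL : 5 ≤ L) (p : Fin (coCycle L).n) :
    ∃ Q : Finset (Fin (coCycle L).n), #Q = 2 ∧ ∀ q ∈ Q, ¬(coCycle L).rel p q := by
  change Fin L at p
  have : (2 : Fin L) ≠ 0 := by simpa using Fin.natCast_ne_zero_of_lt (L := L) two_pos (by omega)
  refine ⟨({p + 1, p - 1} : Finset (Fin L)),
    card_pair fun h : p + 1 = p - 1 => this (by linear_combination h), fun q hq => ?_⟩
  change q ∈ ({p + 1, p - 1} : Finset (Fin L)) at hq
  change Fin L at q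
  simp only [coCycle, mem_insert, mem_singleton] at hq ⊢
  grind

open Classical in
theorem card_common_not_rel_coCycle_le (hL : 5 ≤ L) (T : Finset (Fin (coCycle L).n))
    (hT : #T = 2) : #{u | ∀ v ∈ T, ¬(coCycle L).rel u v} ≤ 1 := by
  have : (4 : Fin L) ≠ 0 := by
    simpa using Fin.natCast_ne_zero_of_lt (L := L) (a := 4) (by omega) (by omega)
  obtain ⟨v, w, hvw, rfl⟩ := card_eq_two.mp hT
  refine card_le_one.mpr fun u hu u' hu' => ?_
  simp only [mem_filter, mem_univ, true_and, mem_insert, mem_singleton, forall_eq_or_imp,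
    forall_eq] at hu hu'
  change Fin L at u u' v w
  simp only [coCycle, not_and_or, not_not] at hu hu'
  grind

end CoCycle

theorem not_isWqo_avoid_of_forall_exists_not_rel {G : FinBinRel} (hG : ∀ x, ∃ y, ¬G.rel x y) :
    ¬IsWqo HomLe {H | ReflGraph H ∧ ¬HomLe G H} := by
  intro hwqo
  -- too many vertices to map onto `G`, and at least 5 so that two share one non-neighbour at most
  obtain ⟨i, j, hij, hle⟩ := hwqo (fun j => coCycle (2 * G.n + j + 5)) fun j =>
    ⟨coCycle_reflGraph (by omega), fun h => by
      have := le_mul_of_homLe_of_exists_not_rel h hG card_not_rel_coCycle_le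
      rw [coCycle_n] at this
      omega⟩
  have := le_mul_of_homLe hle (exists_pair_not_rel_coCycle (by omega))
    (card_common_not_rel_coCycle_le (by omega))
  rw [coCycle_n, coCycle_n, one_mul] at this
  omega

def IsCompleteOutside (H : FinBinRel) (S : Set (Fin H.n)) : Prop :=
  ∀ u v, u ∉ S → v ∉ S → H.rel u v

theorem exists_coMatching_isCompleteOutside {H : FinBinRel} (hH : ReflGraph H) :
    ∃ r : Fin H.n → Fin H.n → Prop, ReflGraph ⟨H.n, r⟩ ∧ IsCoMatching ⟨H.n, r⟩ ∧
      (∀ x y, H.rel x y → r x y) ∧ IsCompleteOutside H ↑(nonUniversal ⟨H.n, r⟩) := by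
  classical
  let R := {r : Fin H.n → Fin H.n → Prop //
    ReflGraph ⟨H.n, r⟩ ∧ IsCoMatching ⟨H.n, r⟩ ∧ ∀ x y, H.rel x y → r x y}
  have : Nonempty R := ⟨⟨fun _ _ => True, ⟨fun _ => trivial, fun _ _ _ => trivial⟩,
    fun _ _ _ h => absurd trivial h, fun _ _ _ => trivial⟩⟩
  obtain ⟨⟨r, hr, hrM, hHr⟩, hmax⟩ :=
    Finite.exists_max fun r : R => #(nonUniversal ⟨H.n, r.1⟩)
  refine ⟨r, hr, hrM, hHr, fun u v hu hv => ?_⟩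
  by_contra huv
  simp only [mem_coe, mem_nonUniversal, not_exists, not_not] at hu hv
  -- deleting the edge `uv` from `r` gives a larger co-matching above `H`
  let r' x y := r x y ∧ ¬((x = u ∧ y = v) ∨ (x = v ∧ y = u))
  have hr' : ReflGraph ⟨H.n, r'⟩ ∧ IsCoMatching ⟨H.n, r'⟩ ∧
      ∀ x y, H.rel x y → r' x y := by
    have huv' : u ≠ v := fun h => huv (h ▸ hH.1 u)
    refine ⟨⟨fun x => ⟨hr.1 x, by grind⟩, fun x y h => ⟨hr.2 _ _ h.1, by grind⟩⟩,
      fun x y z => ?_, fun x y h => ⟨hHr x y h, ?_⟩⟩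
    · have := hrM x y z
      grind
    · rintro (⟨rfl, rfl⟩ | ⟨rfl, rfl⟩) <;> grind [hH.2]
  have hlt : nonUniversal ⟨H.n, r⟩ ⊂ nonUniversal ⟨H.n, r'⟩ := by
    refine ssubset_iff_of_subset (fun x hx => ?_) |>.mpr ⟨u, ?_, ?_⟩
    · obtain ⟨y, hy⟩ := mem_nonUniversal.mp hx
      exact mem_nonUniversal.mpr ⟨y, fun h => hy h.1⟩
    · exact mem_nonUniversal.mpr ⟨v, fun h => h.2 (Or.inl ⟨rfl, rfl⟩)⟩
    · simpa [mem_nonUniversal] using hu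
  exact (card_lt_card hlt).not_ge (hmax ⟨r', hr'⟩)

theorem exists_isCompleteOutside_of_not_homLe {H : FinBinRel} (hH : ReflGraph H) {n k : ℕ}
    (hk : 2 * k < n) (hN : ¬HomLe (Ngraph n k) H) :
    ∃ S : Finset (Fin H.n), #S ≤ n ∧ IsCompleteOutside H S := by
  by_cases hn : H.n < n
  · exact ⟨univ, by simpa using hn.le, fun u _ hu => absurd (mem_coe.mpr (mem_univ u)) hu⟩
  obtain ⟨r, hr, hrM, hHr, hS⟩ := exists_coMatching_isCompleteOutside hH
  obtain ⟨k', hk', hiso⟩ := hrM.exists_binIso_ngraph hr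
  have : k' < k := by
    by_contra! h
    exact hN (((homLe_ngraph_ngraph h hk (not_lt.mp hn)).trans hiso.homLe).trans
      (homLe_of_rel_imp hHr))
  exact ⟨_, by omega, hS⟩

theorem Function.partialInv_eq_none_iff {α β : Type*} {f : α → β} {b : β} :
    partialInv f b = none ↔ b ∉ Set.range f := by
  unfold partialInv
  split_ifs with h <;> simpa using h

theorem exists_surjective_of_card_fiber_le {α β L : Type*} [Finite α] [Finite β] (la : α → L)
    (lb : β → L) (hcard : ∀ ℓ, Nat.card {a // la a = ℓ} ≤ Nat.card {b // lb b = ℓ})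
    (hne : ∀ b, ∃ a, la a = lb b) :
    ∃ f : β → α, Surjective f ∧ ∀ b, la (f b) = lb b := by
  classical
  have := Fintype.ofFinite α
  have := Fintype.ofFinite β
  have e : ∀ ℓ, {a // la a = ℓ} ↪ {b // lb b = ℓ} := fun ℓ =>
    (Embedding.nonempty_of_card_le (by simpa only [Nat.card_eq_fintype_card] using hcard ℓ)).some
  let ι : α ↪ β := ((Equiv.sigmaFiberEquiv la).symm.toEmbedding.trans
    (Embedding.sigmaMap (Embedding.refl L) e)).trans (Equiv.sigmaFiberEquiv lb).toEmbedding
  have hι : ∀ a, lb (ι a) = la a := fun a => (e (la a) ⟨a, rfl⟩).2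
  refine ⟨fun b => if h : ∃ a, ι a = b then h.choose else (hne b).choose,
    fun a => ⟨ι a, ?_⟩, fun b => ?_⟩
  · dsimp only
    rw [dif_pos ⟨a, rfl⟩]
    exact ι.injective (⟨a, rfl⟩ : ∃ a', ι a' = ι a).choose_spec
  · dsimp only
    split_ifs with h
    · rw [← hι, h.choose_spec]
    · exact (hne b).choose_spec

section CoreLabel

variable {ι : Type*}

noncomputable def coreLabel (H : FinBinRel) (s : ι → Fin H.n) (v : Fin H.n) :
    Option ι × (ι → Prop) × (ι → Prop) :=
  (partialInv s v, fun i => H.rel (s i) v, fun i => H.rel v (s i))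

theorem isHom_of_coreLabel {A H : FinBinRel} {sA : ι → Fin A.n} {sH : ι → Fin H.n}
    (hsA : Injective sA) (hsH : Injective sH) (hA : IsCompleteOutside A (Set.range sA))
    {f : Fin H.n → Fin A.n} (hf : ∀ v, coreLabel A sA (f v) = coreLabel H sH v) :
    IsHom H A f := by
  have hcore : ∀ v i, partialInv sH v = some i → v = sH i ∧ f v = sA i := fun v i h =>
    ⟨((hsH.isPartialInv i v).mp h).symm,
      ((hsA.isPartialInv i (f v)).mp ((congrArg Prod.fst (hf v)).trans h)).symm⟩
  intro x y hxy
  rcases hx : partialInv sH x with _ | i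
  · rcases hy : partialInv sH y with _ | j
    · apply hA <;> rw [← partialInv_eq_none_iff]
      · exact (congrArg Prod.fst (hf x)).trans hx
      · exact (congrArg Prod.fst (hf y)).trans hy
    · obtain ⟨rfl, hfy⟩ := hcore y j hy
      rw [hfy]
      exact (congrFun (congrArg (·.2.2) (hf x)) j).mpr hxy
  · obtain ⟨rfl, hfx⟩ := hcore x i hx
    rw [hfx]
    exact (congrFun (congrArg (·.2.1) (hf y)) i).mpr hxy

theorem homLe_of_coreLabel {A H : FinBinRel} {sA : ι → Fin A.n} {sH : ι → Fin H.n}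
    (hsA : Injective sA) (hsH : Injective sH) (hA : IsCompleteOutside A (Set.range sA))
    (hcard : ∀ ℓ,
      Nat.card {a // coreLabel A sA a = ℓ} ≤ Nat.card {v // coreLabel H sH v = ℓ})
    (hne : ∀ v, ∃ a, coreLabel A sA a = coreLabel H sH v) : HomLe A H :=
  let ⟨f, hf, hfl⟩ := exists_surjective_of_card_fiber_le _ _ hcard hne
  ⟨f, hf, isHom_of_coreLabel hsA hsH hA hfl⟩

end CoreLabel

theorem isWqo_isCompleteOutside (K : ℕ) :
    IsWqo HomLe {H | ∃ s : Fin K ↪ Fin H.n, IsCompleteOutside H (Set.range s)} := by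
  let L := Option (Fin K) × (Fin K → Prop) × (Fin K → Prop)
  refine isWqo_of_wellQuasiOrdered
    ((Finite.wellQuasiOrdered (· = ·)).prod (wellQuasiOrdered_le (α := L → ℕ)))
    (fun H (a : (L → Prop) × (L → ℕ)) => ∃ s : Fin K ↪ Fin H.n,
      IsCompleteOutside H (Set.range s) ∧
      a = (fun ℓ => ∃ v, coreLabel H s v = ℓ,
        fun ℓ => Nat.card {v // coreLabel H s v = ℓ}))
    (fun H ⟨s, hs⟩ => ⟨_, s, hs, rfl⟩) ?_
  rintro A H _ _ ⟨sA, hA, rfl⟩ ⟨sH, -, rfl⟩ ⟨hsupp, hcard⟩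
  exact homLe_of_coreLabel sA.injective sH.injective hA hcard
    fun v => (congrFun hsupp _).mpr ⟨v, rfl⟩

theorem isWqo_avoid_ngraph {n k : ℕ} (hk : 2 * k < n) :
    IsWqo HomLe {H | ReflGraph H ∧ ¬HomLe (Ngraph n k) H} := by
  let C K := {H : FinBinRel | ∃ s : Fin K ↪ Fin H.n, IsCompleteOutside H (Set.range s)}
  have : IsWqo HomLe (⋃ K ∈ range (n + 1), C K) := isWqo_iff_partiallyWellOrderedOn.mpr <|
    (Finset.partiallyWellOrderedOn_bUnion _).mpr fun K _ =>
      isWqo_iff_partiallyWellOrderedOn.mp (isWqo_isCompleteOutside K)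
  refine this.mono fun H ⟨hH, hN⟩ => ?_
  obtain ⟨S, hSn, hS⟩ := exists_isCompleteOutside_of_not_homLe hH hk hN
  simp only [Set.mem_iUnion]
  exact ⟨#S, mem_range.mpr (by omega), (S.orderEmbOfFin rfl).toEmbedding,
    by simpa [Finset.range_orderEmbOfFin] using hS⟩

/-- For a reflexive graph `G`, the avoidance class `Av(G)` within reflexive graphs under
the homomorphic image ordering is well quasi-ordered iff `G` is a partial subcomplete
graph `N_{n,k}` (with `2k < n`). -/
theorem stmt_10 (G : FinBinRel) (hG : ReflGraph G) :
    IsWqo HomLe {H | ReflGraph H ∧ ¬ HomLe G H} ↔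
      ∃ n k, 2 * k < n ∧ BinIso G (Ngraph n k) := by
  constructor
  · intro hwqo
    have hM : IsCoMatching G := by_contra fun h => not_isWqo_avoid_of_not_isCoMatching h hwqo
    obtain ⟨x, hx⟩ : ∃ x, x ∉ nonUniversal G := by
      by_contra! h
      exact not_isWqo_avoid_of_forall_exists_not_rel (fun x => mem_nonUniversal.mp (h x)) hwqo
    obtain ⟨k, hk, hiso⟩ := hM.exists_binIso_ngraph hG
    exact ⟨G.n, k, by simpa [hk] using card_lt_univ_of_notMem hx, hiso⟩
  · rintro ⟨n, k, hk, hiso⟩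
    exact (isWqo_avoid_ngraph hk).mono fun H hH =>
      ⟨hH.1, fun h => hH.2 (hiso.symm.homLe.trans h)⟩
end

section
/- If a reflexive graph H of size at least n has a set of k pairwise disjoint non-edges, then there is a surjective homomorphism from H onto the partial subcomplete graph N_{n,k}. -/
/-- A reflexive graph `H` of size at least `n` with `k` pairwise disjoint non-edges maps
onto the partial subcomplete graph `N_{n,k}` by a surjective homomorphism. -/
theorem stmt_11 (n k : ℕ) (hkn : 2 * k < n) (H : FinBinRel) (hH : ReflGraph H)
    (hsize : n ≤ H.n) (a b : Fin k → Fin H.n)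
    (hinj : Function.Injective (Sum.elim a b))
    (hne : ∀ i, ¬ H.rel (a i) (b i)) :
    HomLe (Ngraph n k) H := by
  classical
  -- the finset of vertices not among the endpoints a i, b i
  set E : Finset (Fin H.n) := Finset.univ.image (Sum.elim a b) with hE
  set S : Finset (Fin H.n) := Finset.univ \ E with hS
  have hEcard : E.card = 2 * k := by
    rw [hE, Finset.card_image_of_injective _ hinj, Finset.card_univ]
    simp [two_mul]
  have hScard : n - 2 * k ≤ S.card := by
    rw [hS, Finset.card_sdiff_of_subset (Finset.subset_univ E), Finset.card_univ, Fintype.card_fin,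
      hEcard]
    omega
  have hn0 : 0 < n := by omega
  have hHn0 : 0 < H.n := by omega
  -- injective map from Fin (n - 2k) into S
  let e : Fin (n - 2 * k) ↪o Fin H.n := S.orderEmbOfCardLe hScard
  have he : ∀ i, e i ∈ S := fun i => S.orderEmbOfCardLe_mem hScard i
  -- build g : Fin n → Fin H.n
  have hg2 : ∀ t : Fin n, t.val < 2 * k → t.val / 2 < k := by
    intro t ht; omega
  let g : Fin n → Fin H.n := fun t =>
    if h : t.val < 2 * k then
      (if t.val % 2 = 0 then a ⟨t.val / 2, hg2 t h⟩ else b ⟨t.val / 2, hg2 t h⟩)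
    else e ⟨t.val - 2 * k, by omega⟩
  have hgE : ∀ t : Fin n, t.val < 2 * k → g t ∈ E := by
    intro t ht
    simp only [g, dif_pos ht]
    split
    · exact Finset.mem_image.2 ⟨Sum.inl ⟨t.val / 2, hg2 t ht⟩, Finset.mem_univ _, rfl⟩
    · exact Finset.mem_image.2 ⟨Sum.inr ⟨t.val / 2, hg2 t ht⟩, Finset.mem_univ _, rfl⟩
  have hginj : Function.Injective g := by
    intro t t' h
    by_cases ht : t.val < 2 * k <;> by_cases ht' : t'.val < 2 * k
    · simp only [g, dif_pos ht, dif_pos ht'] at h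
      by_cases h1 : t.val % 2 = 0 <;> by_cases h2 : t'.val % 2 = 0
      · rw [if_pos h1, if_pos h2] at h
        have := hinj (show Sum.elim a b (Sum.inl ⟨t.val / 2, hg2 t ht⟩) =
          Sum.elim a b (Sum.inl ⟨t'.val / 2, hg2 t' ht'⟩) from h)
        have := congrArg Fin.val (Sum.inl.inj this)
        simp only [Fin.val_mk] at this
        exact Fin.ext (by omega)
      · rw [if_pos h1, if_neg h2] at h
        exact absurd (hinj (show Sum.elim a b (Sum.inl ⟨t.val / 2, hg2 t ht⟩) =
          Sum.elim a b (Sum.inr ⟨t'.val / 2, hg2 t' ht'⟩) from h)) (by simp)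
      · rw [if_neg h1, if_pos h2] at h
        exact absurd (hinj (show Sum.elim a b (Sum.inr ⟨t.val / 2, hg2 t ht⟩) =
          Sum.elim a b (Sum.inl ⟨t'.val / 2, hg2 t' ht'⟩) from h)) (by simp)
      · rw [if_neg h1, if_neg h2] at h
        have := hinj (show Sum.elim a b (Sum.inr ⟨t.val / 2, hg2 t ht⟩) =
          Sum.elim a b (Sum.inr ⟨t'.val / 2, hg2 t' ht'⟩) from h)
        have := congrArg Fin.val (Sum.inr.inj this)
        simp only [Fin.val_mk] at this
        exact Fin.ext (by omega)
    · exfalso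
      have h1 := hgE t ht
      have h2 := he ⟨t'.val - 2 * k, by omega⟩
      rw [h] at h1
      simp only [g, dif_neg ht'] at h1
      rw [hS, Finset.mem_sdiff] at h2
      exact h2.2 h1
    · exfalso
      have h1 := hgE t' ht'
      have h2 := he ⟨t.val - 2 * k, by omega⟩
      rw [← h] at h1
      simp only [g, dif_neg ht] at h1
      rw [hS, Finset.mem_sdiff] at h2
      exact h2.2 h1
    · simp only [g, dif_neg ht, dif_neg ht'] at h
      have := e.injective h
      have := congrArg Fin.val this
      simp at this
      exact Fin.ext (by omega)
  -- define f as partial inverse of g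
  let dflt : Fin n := ⟨n - 1, by omega⟩
  let f : Fin H.n → Fin n := fun x =>
    if h : ∃ t, g t = x then h.choose else dflt
  have hfg : ∀ t, f (g t) = t := by
    intro t
    have h : ∃ t', g t' = g t := ⟨t, rfl⟩
    simp only [f, dif_pos h]
    exact hginj h.choose_spec
  have hsurj : Function.Surjective f := fun t => ⟨g t, hfg t⟩
  -- key: if f x has small value then x = g (f x)
  have hkey : ∀ x : Fin H.n, (f x).val < 2 * k → g (f x) = x := by
    intro x hx
    by_cases h : ∃ t, g t = x
    · simp only [f, dif_pos h] at hx ⊢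
      exact h.choose_spec
    · exfalso
      simp only [f, dif_neg h] at hx
      simp only [dflt] at hx
      omega
  have hga : ∀ m (hm : m < k), g ⟨2 * m, by omega⟩ = a ⟨m, hm⟩ := by
    intro m hm
    have h1 : (2 * m) < 2 * k := by omega
    simp only [g, dif_pos h1]
    rw [if_pos (by omega)]
    congr 1
    apply Fin.ext
    simp only [Fin.val_mk]
    omega
  have hgb : ∀ m (hm : m < k), g ⟨2 * m + 1, by omega⟩ = b ⟨m, hm⟩ := by
    intro m hm
    have h1 : (2 * m + 1) < 2 * k := by omega
    simp only [g, dif_pos h1]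
    rw [if_neg (by omega)]
    congr 1
    apply Fin.ext
    simp only [Fin.val_mk]
    omega
  refine ⟨f, hsurj, ?_⟩
  intro x y hxy
  rintro ⟨m, hm, hcase⟩
  rcases hcase with ⟨h1, h2⟩ | ⟨h1, h2⟩
  · have hx : g (f x) = x := hkey x (by omega)
    have hy : g (f y) = y := hkey y (by omega)
    have hfx : f x = ⟨2 * m, by omega⟩ := Fin.ext h1
    have hfy : f y = ⟨2 * m + 1, by omega⟩ := Fin.ext h2
    rw [hfx, hga m hm] at hx
    rw [hfy, hgb m hm] at hy
    exact hne ⟨m, hm⟩ (hx ▸ hy ▸ hxy)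
  · have hx : g (f x) = x := hkey x (by omega)
    have hy : g (f y) = y := hkey y (by omega)
    have hfy : f y = ⟨2 * m, by omega⟩ := Fin.ext h1
    have hfx : f x = ⟨2 * m + 1, by omega⟩ := Fin.ext h2
    rw [hfy, hga m hm] at hy
    rw [hfx, hgb m hm] at hx
    exact hne ⟨m, hm⟩ (hy ▸ hx ▸ (hH.2 x y hxy))
end

section
/- Within reflexive graphs under the surjective strong homomorphism ordering, the avoidance class Av(N_{3,1}) is well quasi-ordered; indeed Av(N_{3,1}) is contained in the class of graphs that are disjoint unions of a complete graph and an empty graph. -/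
open Function Set

/-! If two distinct non-isolated vertices `x`, `y` of a reflexive graph were non-adjacent, sending
`x ↦ 0`, `y ↦ 1` and every other vertex to `2` would be a surjective strong homomorphism onto
`N_{3,1}`. So a graph avoiding `N_{3,1}` is a clique on its non-isolated vertices plus isolated
vertices. Between two such graphs a surjective strong homomorphism exists as soon as each part of
the target is at most as large as the corresponding part of the source, and empty if that part is
empty; by Dickson's lemma every sequence contains such a pair. -/

def IsCliqueUnionEdgeless (H : FinBinRel) (C : Set (Fin H.n)) : Prop :=
  (∀ x ∈ C, ∀ y ∈ C, H.rel x y) ∧ (∀ x ∉ C, ∀ y ∉ C, x ≠ y → ¬ H.rel x y) ∧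
    (∀ x ∈ C, ∀ y ∉ C, ¬ H.rel x y)

def nonIsolated (H : FinBinRel) : Set (Fin H.n) := {x | ∃ y, y ≠ x ∧ H.rel x y}

lemma ngraph_three_one_rel_iff (i j : Fin 3) :
    (Ngraph 3 1).rel i j ↔ ¬ (i = 0 ∧ j = 1 ∨ i = 1 ∧ j = 0) := by
  simp only [Ngraph, Nat.lt_one_iff, exists_eq_left, Fin.ext_iff]
  omega

/-- The neighbours `z` of `x` and `w` of `y` lift the edges `{0, 2}` and `{1, 2}` of `N_{3,1}`. -/
lemma strongLe_ngraph_three_one {H : FinBinRel} (hH : ReflGraph H) {x y z w : Fin H.n}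
    (hxy : ¬ H.rel x y) (hxz : H.rel x z) (hzx : z ≠ x) (hyw : H.rel y w) (hwy : w ≠ y) :
    StrongLe (Ngraph 3 1) H := by
  classical
  have hyx : y ≠ x := fun h => hxy (h ▸ hH.1 x)
  have hzy : z ≠ y := fun h => hxy (h ▸ hxz)
  have hwx : w ≠ x := fun h => hxy (hH.2 _ _ (h ▸ hyw))
  let f : Fin H.n → Fin 3 := fun u => if u = x then 0 else if u = y then 1 else 2
  have hf0 : ∀ u, f u = 0 ↔ u = x := fun u => by
    by_cases u = x <;> by_cases u = y <;> simp_all [f]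
  have hf1 : ∀ u, f u = 1 ↔ u = y := fun u => by
    by_cases u = x <;> by_cases u = y <;> simp_all [f]
  have hfx : f x = 0 := (hf0 x).2 rfl
  have hfy : f y = 1 := (hf1 y).2 rfl
  have hfz : f z = 2 := by simp [f, hzx, hzy]
  have hfw : f w = 2 := by simp [f, hwx, hwy]
  refine ⟨f, fun p => ?_, fun u v huv => ?_, fun (p q : Fin 3) hpq _ _ => ?_⟩
  · fin_cases p
    exacts [⟨x, hfx⟩, ⟨y, hfy⟩, ⟨z, hfz⟩]
  · rw [ngraph_three_one_rel_iff, hf0, hf0, hf1, hf1]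
    rintro (⟨rfl, rfl⟩ | ⟨rfl, rfl⟩)
    exacts [hxy huv, hxy (hH.2 _ _ huv)]
  · replace hpq := (ngraph_three_one_rel_iff p q).1 hpq
    fin_cases p <;> fin_cases q <;> simp at hpq
    exacts [⟨x, x, hH.1 x, hfx, hfx⟩, ⟨x, z, hxz, hfx, hfz⟩, ⟨y, y, hH.1 y, hfy, hfy⟩,
      ⟨y, w, hyw, hfy, hfw⟩, ⟨z, x, hH.2 _ _ hxz, hfz, hfx⟩, ⟨w, y, hH.2 _ _ hyw, hfw, hfy⟩,
      ⟨z, z, hH.1 z, hfz, hfz⟩]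

lemma isCliqueUnionEdgeless_nonIsolated {H : FinBinRel} (hH : ReflGraph H)
    (hav : ¬ StrongLe (Ngraph 3 1) H) : IsCliqueUnionEdgeless H (nonIsolated H) := by
  refine ⟨?_, ?_, ?_⟩
  · rintro x ⟨z, hzx, hxz⟩ y ⟨w, hwy, hyw⟩
    by_contra hxy
    exact hav (strongLe_ngraph_three_one hH hxy hxz hzx hyw hwy)
  · exact fun x hx y _ hxy hrel => hx ⟨y, hxy.symm, hrel⟩
  · exact fun x hx y hy hrel => hy ⟨x, fun h => hy (h ▸ hx), hH.2 _ _ hrel⟩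

namespace IsCliqueUnionEdgeless

variable {H : FinBinRel} {C : Set (Fin H.n)}

lemma mem_of_rel (hC : IsCliqueUnionEdgeless H C) (hH : ReflGraph H) {x y : Fin H.n}
    (hxy : H.rel x y) (hne : x ≠ y) : x ∈ C ∧ y ∈ C := by
  obtain ⟨-, hind, hcross⟩ := hC
  by_cases hx : x ∈ C
  · exact ⟨hx, by_contra fun hy => hcross x hx y hy hxy⟩
  · by_cases hy : y ∈ C
    · exact absurd (hH.2 _ _ hxy) (hcross y hy x hx)
    · exact absurd hxy (hind x hx y hy hne)

/-- All non-loop edges of both graphs lie inside the cliques, so the clique parts are all that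
a strong homomorphism has to match. -/
lemma isStrongHom {H₁ H₂ : FinBinRel} {C₁ : Set (Fin H₁.n)} {C₂ : Set (Fin H₂.n)}
    (hC₁ : IsCliqueUnionEdgeless H₁ C₁) (hC₂ : IsCliqueUnionEdgeless H₂ C₂)
    (h₁ : ReflGraph H₁) (h₂ : ReflGraph H₂) {g : Fin H₂.n → Fin H₁.n} (hg : Surjective g)
    (himage : g '' C₂ = C₁) : IsStrongHom H₂ H₁ g := by
  refine ⟨fun u v huv => ?_, fun p q hpq _ _ => ?_⟩
  · by_cases hne : u = v
    · exact hne ▸ h₁.1 _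
    obtain ⟨hu, hv⟩ := hC₂.mem_of_rel h₂ huv hne
    exact hC₁.1 _ (himage ▸ mem_image_of_mem g hu) _ (himage ▸ mem_image_of_mem g hv)
  · by_cases hne : p = q
    · obtain ⟨u, rfl⟩ := hg p
      exact ⟨u, u, h₂.1 u, rfl, hne ▸ rfl⟩
    obtain ⟨hp, hq⟩ := hC₁.mem_of_rel h₁ hpq hne
    rw [← himage] at hp hq
    obtain ⟨u, hu, rfl⟩ := hp
    obtain ⟨v, hv, rfl⟩ := hq
    exact ⟨u, v, hC₂.1 u hu v hv, rfl, rfl⟩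

end IsCliqueUnionEdgeless

lemma exists_surjective_of_card_le {α β : Type*} [Finite α] [Finite β]
    (hcard : Nat.card α ≤ Nat.card β) (hempty : IsEmpty α → IsEmpty β) :
    ∃ f : β → α, Surjective f := by
  have := Fintype.ofFinite α
  have := Fintype.ofFinite β
  rw [Nat.card_eq_fintype_card, Nat.card_eq_fintype_card] at hcard
  refine exists_surjective_iff.2 ⟨?_, Embedding.nonempty_of_card_le hcard⟩
  rcases isEmpty_or_nonempty α with hα | ⟨⟨a⟩⟩
  · have := hempty hα
    exact ⟨isEmptyElim⟩
  · exact ⟨fun _ => a⟩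

lemma exists_surjective_image_eq {α β : Type*} {s : Set β} {t : Set α}
    (σ : s → t) (hσ : Surjective σ) (ρ : ↥sᶜ → ↥tᶜ) (hρ : Surjective ρ) :
    ∃ g : β → α, Surjective g ∧ g '' s = t := by
  classical
  let g : β → α := fun x => if h : x ∈ s then σ ⟨x, h⟩ else ρ ⟨x, h⟩
  have hgs : ∀ u : s, g u = σ u := fun u => dif_pos u.2
  have hgsc : ∀ u : ↥sᶜ, g u = ρ u := fun u => dif_neg u.2
  refine ⟨g, fun p => ?_, Subset.antisymm ?_ fun p hp => ?_⟩
  · by_cases hp : p ∈ t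
    · obtain ⟨u, hu⟩ := hσ ⟨p, hp⟩
      exact ⟨u, by rw [hgs, hu]⟩
    · obtain ⟨u, hu⟩ := hρ ⟨p, hp⟩
      exact ⟨u, by rw [hgsc, hu]⟩
  · rintro _ ⟨u, hu, rfl⟩
    exact hgs ⟨u, hu⟩ ▸ (σ _).2
  · obtain ⟨u, hu⟩ := hσ ⟨p, hp⟩
    exact ⟨u, u.2, by rw [hgs, hu]⟩

lemma isWqo_of_key_le {α : Type*} [Preorder α] [WellQuasiOrderedLE α]
    {r : FinBinRel → FinBinRel → Prop} {S : Set FinBinRel} (key : FinBinRel → α)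
    (h : ∀ A ∈ S, ∀ B ∈ S, key A ≤ key B → r A B) : IsWqo r S := fun f hf =>
  let ⟨i, j, hij, hle⟩ := wellQuasiOrdered_le (key ∘ f)
  ⟨i, j, hij, h _ (hf i) _ (hf j) hle⟩

/-- Within reflexive graphs under the strong homomorphic image ordering, `Av(N_{3,1})` is
well quasi-ordered; indeed it is contained in the class of graphs that are disjoint
unions of a complete graph and an empty graph. -/
theorem stmt_13 :
    IsWqo StrongLe {H | ReflGraph H ∧ ¬ StrongLe (Ngraph 3 1) H} ∧
    (∀ H : FinBinRel, ReflGraph H → ¬ StrongLe (Ngraph 3 1) H →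
      ∃ C : Set (Fin H.n),
        (∀ x ∈ C, ∀ y ∈ C, H.rel x y) ∧
        (∀ x, x ∉ C → ∀ y, y ∉ C → x ≠ y → ¬ H.rel x y) ∧
        (∀ x ∈ C, ∀ y, y ∉ C → ¬ H.rel x y)) := by
  refine ⟨?_, fun H hH hav => ⟨nonIsolated H, isCliqueUnionEdgeless_nonIsolated hH hav⟩⟩
  let sizeKey (α : Type) : ℕ × Prop := (Nat.card α, IsEmpty α)
  refine isWqo_of_key_le (fun H => (sizeKey (nonIsolated H), sizeKey ↥(nonIsolated H)ᶜ)) ?_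
  rintro A ⟨hA, hAav⟩ B ⟨hB, hBav⟩ ⟨⟨hcard, hempty⟩, ⟨hcard', hempty'⟩⟩
  obtain ⟨σ, hσ⟩ := exists_surjective_of_card_le hcard hempty
  obtain ⟨ρ, hρ⟩ := exists_surjective_of_card_le hcard' hempty'
  obtain ⟨g, hg, himage⟩ := exists_surjective_image_eq σ hσ ρ hρ
  exact ⟨g, hg, (isCliqueUnionEdgeless_nonIsolated hA hAav).isStrongHom
    (isCliqueUnionEdgeless_nonIsolated hB hBav) hA hB hg himage⟩
end
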